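/- Let (α,ᾱ) : A ⇉ B̂ ⊵ B be an LC-quasihomomorphism and H a split exact functor from locally convex algebras to abelian groups. Then: (1) H((α,ᾱ)∘φ) = H(α,ᾱ) ∘ H(φ) for every continuous homomorphism φ : C → A; (2) H(ψ∘(α,ᾱ)) = H(ψ) ∘ H(α,ᾱ) for every algebra homomorphism ψ : B̂ → Ĉ such that there is a locally convex subalgebra C ⊆ Ĉ making (ψ∘α, ψ∘ᾱ) : A ⇉ Ĉ ⊵ C an LC-quasihomomorphism; (3) H(α,ᾱ) = −H(ᾱ,α); (4) if α − ᾱ is a homomorphism orthogonal to ᾱ, then H(α,ᾱ) = H(α−ᾱ). -/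

import Mathlib

/-!  A framework for locally convex algebras, split exact functors,
quasihomomorphisms and locally convex Kasparov modules, following
M. Grensing, "Universal cycles and homological invariants of locally convex
algebras". -/

noncomputable section

open scoped Topology

/-- A locally convex algebra: a complete locally convex topological vector
space over `ℂ` together with a continuous associative bilinear multiplication. -/
structure LCA : Type 1 where
  carrier : Type
  [ring : NonUnitalRing carrier]
  [modC : Module ℂ carrier]
  [modR : Module ℝ carrier]
  [towerRC : IsScalarTower ℝ ℂ carrier]
  [towerC : IsScalarTower ℂ carrier carrier]
  [commC : SMulCommClass ℂ carrier carrier]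
  [us : UniformSpace carrier]
  [uag : IsUniformAddGroup carrier]
  [csmul : ContinuousSMul ℂ carrier]
  [cmul : ContinuousMul carrier]
  [cmplt : CompleteSpace carrier]
  [lcs : LocallyConvexSpace ℝ carrier]

attribute [instance] LCA.ring LCA.modC LCA.modR LCA.towerRC LCA.towerC LCA.commC
  LCA.us LCA.uag LCA.csmul LCA.cmul LCA.cmplt LCA.lcs

instance (A : LCA) : Nonempty A.carrier := ⟨0⟩

/-- Morphisms of locally convex algebras: continuous `ℂ`-algebra homomorphisms. -/
structure LCAHom (A B : LCA) where
  toFun : A.carrier → B.carrier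
  map_add' : ∀ x y, toFun (x + y) = toFun x + toFun y
  map_mul' : ∀ x y, toFun (x * y) = toFun x * toFun y
  map_smul' : ∀ (c : ℂ) (x), toFun (c • x) = c • toFun x
  cont' : Continuous toFun

namespace LCAHom

protected def id (A : LCA) : LCAHom A A :=
  ⟨fun x => x, fun _ _ => rfl, fun _ _ => rfl, fun _ _ => rfl, continuous_id⟩

def comp {A B C : LCA} (g : LCAHom B C) (f : LCAHom A B) : LCAHom A C where
  toFun := fun x => g.toFun (f.toFun x)
  map_add' := fun x y => by rw [f.map_add', g.map_add']
  map_mul' := fun x y => by rw [f.map_mul', g.map_mul']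
  map_smul' := fun c x => by rw [f.map_smul', g.map_smul']
  cont' := g.cont'.comp f.cont'

protected lemma map_zero {A B : LCA} (f : LCAHom A B) : f.toFun 0 = 0 := by
  have h := f.map_add' 0 0
  rw [add_zero] at h
  exact (left_eq_add.mp h)

/-- The underlying (non-unital) `ℂ`-algebra homomorphism. -/
def toNA {A B : LCA} (f : LCAHom A B) : A.carrier →ₙₐ[ℂ] B.carrier where
  toFun := f.toFun
  map_add' := f.map_add'
  map_mul' := f.map_mul'
  map_smul' := f.map_smul'
  map_zero' := f.map_zero

end LCAHom

/-- A functor from locally convex algebras to abelian groups. -/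
structure LCFunctor where
  obj : LCA → Type
  [ab : ∀ A, AddCommGroup (obj A)]
  map : ∀ {A B : LCA}, LCAHom A B → (obj A →+ obj B)
  map_id : ∀ A : LCA, map (LCAHom.id A) = AddMonoidHom.id (obj A)
  map_comp : ∀ {A B C : LCA} (f : LCAHom A B) (g : LCAHom B C),
      map (g.comp f) = (map g).comp (map f)

attribute [instance] LCFunctor.ab

/-- A short exact sequence of locally convex algebras which is split by a
continuous algebra homomorphism. -/
structure SplitExactSeq (C B A : LCA) where
  ι : LCAHom C B
  π : LCAHom B A
  σ : LCAHom A B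
  ι_inj : Function.Injective ι.toFun
  π_surj : Function.Surjective π.toFun
  exact : ∀ b, π.toFun b = 0 ↔ b ∈ Set.range ι.toFun
  is_split : ∀ a, π.toFun (σ.toFun a) = a

/-- A functor is split exact if it maps split exact sequences of locally convex
algebras to (split) exact sequences of abelian groups. -/
def LCFunctor.IsSplitExact (H : LCFunctor) : Prop :=
  ∀ ⦃C B A : LCA⦄ (E : SplitExactSeq C B A),
    Function.Injective (H.map E.ι) ∧ Function.Surjective (H.map E.π) ∧
      ∀ x, H.map E.π x = 0 ↔ x ∈ Set.range (H.map E.ι)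

/-- A double split extension of locally convex algebras: a split short exact
sequence together with a second splitting. -/
structure DoubleSplitSeq (B D A : LCA) where
  ι : LCAHom B D
  π : LCAHom D A
  σ : LCAHom A D
  σ' : LCAHom A D
  ι_inj : Function.Injective ι.toFun
  π_surj : Function.Surjective π.toFun
  exact : ∀ d, π.toFun d = 0 ↔ d ∈ Set.range ι.toFun
  is_split : ∀ a, π.toFun (σ.toFun a) = a
  is_split' : ∀ a, π.toFun (σ'.toFun a) = a

/-- The morphism `H(σ,σ̄) = H(ι)⁻¹ ∘ (H(σ) - H(σ̄))` induced by a double split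
extension under a (split exact) functor `H`. -/
def DoubleSplitSeq.induced {B D A : LCA} (E : DoubleSplitSeq B D A) (H : LCFunctor) :
    H.obj A → H.obj B :=
  fun x => Function.invFun (H.map E.ι) (H.map E.σ x - H.map E.σ' x)

/-! ### Quasihomomorphisms and the algebra `D_α` -/

/-- Auxiliary instance: finite products of locally convex spaces are locally convex. -/
instance prodLocallyConvex {E F : Type*} [AddCommGroup E] [Module ℝ E] [TopologicalSpace E]
    [AddCommGroup F] [Module ℝ F] [TopologicalSpace F]
    [LocallyConvexSpace ℝ E] [LocallyConvexSpace ℝ F] : LocallyConvexSpace ℝ (E × F) := by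
  refine LocallyConvexSpace.ofBases ℝ (E × F)
    (fun _ (st : Set E × Set F) => st.1 ×ˢ st.2)
    (fun x st => (st.1 ∈ 𝓝 x.1 ∧ Convex ℝ st.1) ∧ (st.2 ∈ 𝓝 x.2 ∧ Convex ℝ st.2))
    (fun x => ?_) ?_
  · exact (LocallyConvexSpace.convex_basis x.1).prod_nhds (LocallyConvexSpace.convex_basis x.2)
  · rintro x ⟨s, t⟩ ⟨⟨-, hs⟩, ⟨-, ht⟩⟩
    exact hs.prod ht

/-- The data `(B̂, j, α, mulL, mulR)` of an algebra `B̂ ⊇ B` together with a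
homomorphism `α : A → B̂` for which `α(A)·B ⊆ B` and `B·α(A) ⊆ B` continuously.
This is the raw data needed to construct the locally convex algebra `D_α`. -/
structure PreQH (A B : LCA) where
  hat : Type
  [hatRing : NonUnitalRing hat]
  [hatMod : Module ℂ hat]
  [hatTower : IsScalarTower ℂ hat hat]
  [hatComm : SMulCommClass ℂ hat hat]
  j : B.carrier →ₙₐ[ℂ] hat
  j_inj : Function.Injective j
  fst : A.carrier →ₙₐ[ℂ] hat
  mulL : A.carrier → B.carrier → B.carrier
  mulL_spec : ∀ a b, j (mulL a b) = fst a * j b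
  mulL_cont : Continuous fun p : A.carrier × B.carrier => mulL p.1 p.2
  mulR : B.carrier → A.carrier → B.carrier
  mulR_spec : ∀ b a, j (mulR b a) = j b * fst a
  mulR_cont : Continuous fun p : B.carrier × A.carrier => mulR p.1 p.2

attribute [instance] PreQH.hatRing PreQH.hatMod PreQH.hatTower PreQH.hatComm

namespace PreQH

variable {A B : LCA} (q : PreQH A B)

lemma mulL_add_left (a a' : A.carrier) (b : B.carrier) :
    q.mulL (a + a') b = q.mulL a b + q.mulL a' b :=
  q.j_inj <| by simp only [q.mulL_spec, map_add, add_mul]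

lemma mulL_add_right (a : A.carrier) (b b' : B.carrier) :
    q.mulL a (b + b') = q.mulL a b + q.mulL a b' :=
  q.j_inj <| by simp only [q.mulL_spec, map_add, mul_add]

lemma mulL_zero_left (b : B.carrier) : q.mulL 0 b = 0 :=
  q.j_inj <| by simp only [q.mulL_spec, map_zero, zero_mul]

lemma mulL_zero_right (a : A.carrier) : q.mulL a 0 = 0 :=
  q.j_inj <| by simp only [q.mulL_spec, map_zero, mul_zero]

lemma mulL_smul_left (c : ℂ) (a : A.carrier) (b : B.carrier) :
    q.mulL (c • a) b = c • q.mulL a b :=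
  q.j_inj <| by simp only [q.mulL_spec, map_smul, smul_mul_assoc]

lemma mulL_smul_right (c : ℂ) (a : A.carrier) (b : B.carrier) :
    q.mulL a (c • b) = c • q.mulL a b :=
  q.j_inj <| by simp only [q.mulL_spec, map_smul, mul_smul_comm]

lemma mulR_add_left (b b' : B.carrier) (a : A.carrier) :
    q.mulR (b + b') a = q.mulR b a + q.mulR b' a :=
  q.j_inj <| by simp only [q.mulR_spec, map_add, add_mul]

lemma mulR_add_right (b : B.carrier) (a a' : A.carrier) :
    q.mulR b (a + a') = q.mulR b a + q.mulR b a' :=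
  q.j_inj <| by simp only [q.mulR_spec, map_add, mul_add]

lemma mulR_zero_left (a : A.carrier) : q.mulR 0 a = 0 :=
  q.j_inj <| by simp only [q.mulR_spec, map_zero, zero_mul]

lemma mulR_zero_right (b : B.carrier) : q.mulR b 0 = 0 :=
  q.j_inj <| by simp only [q.mulR_spec, map_zero, mul_zero]

lemma mulR_smul_left (c : ℂ) (b : B.carrier) (a : A.carrier) :
    q.mulR (c • b) a = c • q.mulR b a :=
  q.j_inj <| by simp only [q.mulR_spec, map_smul, smul_mul_assoc]

lemma mulR_smul_right (c : ℂ) (b : B.carrier) (a : A.carrier) :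
    q.mulR b (c • a) = c • q.mulR b a :=
  q.j_inj <| by simp only [q.mulR_spec, map_smul, mul_smul_comm]

end PreQH

/-- The underlying topological vector space `A ⊕ B` of the algebra `D_α`. -/
def PreQH.Car {A B : LCA} (_q : PreQH A B) : Type := A.carrier × B.carrier

namespace PreQH

variable {A B : LCA} (q : PreQH A B)

instance : AddCommGroup q.Car := inferInstanceAs (AddCommGroup (A.carrier × B.carrier))
instance : Module ℂ q.Car := inferInstanceAs (Module ℂ (A.carrier × B.carrier))
instance : Module ℝ q.Car := inferInstanceAs (Module ℝ (A.carrier × B.carrier))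
instance : IsScalarTower ℝ ℂ q.Car :=
  inferInstanceAs (IsScalarTower ℝ ℂ (A.carrier × B.carrier))
instance : UniformSpace q.Car := inferInstanceAs (UniformSpace (A.carrier × B.carrier))
instance : IsUniformAddGroup q.Car := inferInstanceAs (IsUniformAddGroup (A.carrier × B.carrier))
instance : ContinuousSMul ℂ q.Car := inferInstanceAs (ContinuousSMul ℂ (A.carrier × B.carrier))
instance : CompleteSpace q.Car := inferInstanceAs (CompleteSpace (A.carrier × B.carrier))
instance : LocallyConvexSpace ℝ q.Car :=
  inferInstanceAs (LocallyConvexSpace ℝ (A.carrier × B.carrier))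

/-- The multiplication `(a,b)(a',b') = (aa', α(a)b' + bα(a') + bb')` of `D_α`. -/
instance : Mul q.Car :=
  ⟨fun x y => (x.1 * y.1, q.mulL x.1 y.2 + q.mulR x.2 y.1 + x.2 * y.2)⟩

lemma mul_def (x y : q.Car) :
    x * y = (x.1 * y.1, q.mulL x.1 y.2 + q.mulR x.2 y.1 + x.2 * y.2) := rfl

instance : NonUnitalNonAssocRing q.Car :=
  { (inferInstanceAs (AddCommGroup q.Car) : AddCommGroup q.Car), (inferInstanceAs (Mul q.Car) : Mul q.Car) with
    left_distrib := by
      rintro ⟨a, b⟩ ⟨a', b'⟩ ⟨a'', b''⟩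
      refine Prod.ext (mul_add ..) ?_
      show q.mulL a (b' + b'') + q.mulR b (a' + a'') + b * (b' + b'') = _
      simp only [q.mulL_add_right, q.mulR_add_right, mul_add]
      show _ = (q.mulL a b' + q.mulR b a' + b * b') + (q.mulL a b'' + q.mulR b a'' + b * b'')
      abel
    right_distrib := by
      rintro ⟨a, b⟩ ⟨a', b'⟩ ⟨a'', b''⟩
      refine Prod.ext (add_mul ..) ?_
      show q.mulL (a + a') b'' + q.mulR (b + b') a'' + (b + b') * b'' = _
      simp only [q.mulL_add_left, q.mulR_add_left, add_mul]
      show _ = (q.mulL a b'' + q.mulR b a'' + b * b'') + (q.mulL a' b'' + q.mulR b' a'' + b' * b'')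
      abel
    zero_mul := by
      rintro ⟨a, b⟩
      refine Prod.ext (zero_mul ..) ?_
      show q.mulL 0 b + q.mulR 0 a + 0 * b = 0
      simp [q.mulL_zero_left, q.mulR_zero_left]
    mul_zero := by
      rintro ⟨a, b⟩
      refine Prod.ext (mul_zero ..) ?_
      show q.mulL a 0 + q.mulR b 0 + b * 0 = 0
      simp [q.mulL_zero_right, q.mulR_zero_right] }

instance : NonUnitalRing q.Car :=
  { (inferInstanceAs (NonUnitalNonAssocRing q.Car) : NonUnitalNonAssocRing q.Car) with
    mul_assoc := by
      rintro ⟨a, b⟩ ⟨a', b'⟩ ⟨a'', b''⟩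
      refine Prod.ext (mul_assoc ..) ?_
      apply q.j_inj
      show q.j (q.mulL (a * a') b'' + q.mulR (q.mulL a b' + q.mulR b a' + b * b') a''
            + (q.mulL a b' + q.mulR b a' + b * b') * b'')
          = q.j (q.mulL a (q.mulL a' b'' + q.mulR b' a'' + b' * b'')
            + q.mulR b (a' * a'')
            + b * (q.mulL a' b'' + q.mulR b' a'' + b' * b''))
      simp only [map_add, map_mul, q.mulL_spec, q.mulR_spec]
      simp only [mul_add, add_mul, mul_assoc]
      abel }

instance : IsScalarTower ℂ q.Car q.Car := by
  constructor
  intro c x y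
  rw [smul_eq_mul, smul_eq_mul]
  obtain ⟨a, b⟩ := x
  obtain ⟨a', b'⟩ := y
  refine Prod.ext (smul_mul_assoc ..) ?_
  show q.mulL (c • a) b' + q.mulR (c • b) a' + (c • b) * b'
      = c • (q.mulL a b' + q.mulR b a' + b * b')
  simp only [q.mulL_smul_left, q.mulR_smul_left, smul_mul_assoc, smul_add]

instance : SMulCommClass ℂ q.Car q.Car := by
  constructor
  intro c x y
  rw [smul_eq_mul, smul_eq_mul]
  obtain ⟨a, b⟩ := x
  obtain ⟨a', b'⟩ := y
  refine Prod.ext (mul_smul_comm ..).symm ?_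
  show c • (q.mulL a b' + q.mulR b a' + b * b')
      = q.mulL a (c • b') + q.mulR b (c • a') + b * (c • b')
  simp only [q.mulL_smul_right, q.mulR_smul_right, mul_smul_comm, smul_add]

instance : ContinuousMul q.Car := by
  constructor
  have h1 : Continuous fun p : q.Car × q.Car => p.1.1 * p.2.1 :=
    (continuous_fst.comp continuous_fst).mul (continuous_fst.comp continuous_snd)
  have h2 : Continuous fun p : q.Car × q.Car => q.mulL p.1.1 p.2.2 :=
    q.mulL_cont.comp
      ((continuous_fst.comp continuous_fst).prodMk (continuous_snd.comp continuous_snd))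
  have h3 : Continuous fun p : q.Car × q.Car => q.mulR p.1.2 p.2.1 :=
    q.mulR_cont.comp
      ((continuous_snd.comp continuous_fst).prodMk (continuous_fst.comp continuous_snd))
  have h4 : Continuous fun p : q.Car × q.Car => p.1.2 * p.2.2 :=
    (continuous_snd.comp continuous_fst).mul (continuous_snd.comp continuous_snd)
  exact h1.prodMk ((h2.add h3).add h4)

/-- The locally convex algebra `D_α`. -/
def Dlca : LCA := { carrier := q.Car }

/-- The canonical inclusion `ι_B : B → D_α`. -/
def iotaB : LCAHom B q.Dlca where
  toFun b := ((0 : A.carrier), b)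
  map_add' := fun x y => Prod.ext (by show (0 : A.carrier) = 0 + 0; rw [add_zero]) rfl
  map_mul' := fun x y => by
    refine Prod.ext (by show (0 : A.carrier) = 0 * 0; rw [zero_mul]) ?_
    show x * y = q.mulL 0 y + q.mulR x 0 + x * y
    simp [q.mulL_zero_left, q.mulR_zero_right]
  map_smul' := fun c x => Prod.ext (by show (0 : A.carrier) = c • 0; rw [smul_zero]) rfl
  cont' := continuous_const.prodMk continuous_id

/-- The canonical projection `π : D_α → A`. -/
def piA : LCAHom q.Dlca A where
  toFun x := x.1
  map_add' := fun _ _ => rfl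
  map_mul' := fun _ _ => rfl
  map_smul' := fun _ _ => rfl
  cont' := continuous_fst

/-- The canonical splitting `α' = id_A ⊕ 0 : A → D_α`. -/
def splitFst : LCAHom A q.Dlca where
  toFun a := (a, (0 : B.carrier))
  map_add' := fun x y => Prod.ext rfl (by show (0 : B.carrier) = 0 + 0; rw [add_zero])
  map_mul' := fun x y => by
    refine Prod.ext rfl ?_
    show (0 : B.carrier) = q.mulL x 0 + q.mulR 0 y + 0 * 0
    simp [q.mulL_zero_right, q.mulR_zero_left]
  map_smul' := fun c x => Prod.ext rfl (by show (0 : B.carrier) = c • 0; rw [smul_zero])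
  cont' := continuous_id.prodMk continuous_const

/-- The split exact sequence `0 → B → D_α → A → 0`. -/
def ext : SplitExactSeq B q.Dlca A where
  ι := q.iotaB
  π := q.piA
  σ := q.splitFst
  ι_inj := fun x y h => congrArg Prod.snd h
  π_surj := fun a => ⟨(a, 0), rfl⟩
  exact := fun d => by
    constructor
    · intro h
      exact ⟨d.2, Prod.ext (by simpa [iotaB, piA] using h.symm) rfl⟩
    · rintro ⟨b, rfl⟩
      rfl
  is_split := fun a => rfl

end PreQH

/-- An `LC`-quasihomomorphism `(α, ᾱ) : A ⇉ B̂ ⊵ B`: a pair of homomorphisms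
`α, ᾱ : A → B̂` into an algebra containing the locally convex algebra `B`
such that `α - ᾱ`, `α(·)b` and `bα(·)` are `B`-valued and continuous. -/
structure QuasiHom (A B : LCA) extends PreQH A B where
  snd : A.carrier →ₙₐ[ℂ] hat
  diff : A.carrier → B.carrier
  diff_spec : ∀ a, j (diff a) = fst a - snd a
  diff_cont : Continuous diff

namespace QuasiHom

variable {A B : LCA} (q : QuasiHom A B)

lemma diff_add (a a' : A.carrier) : q.diff (a + a') = q.diff a + q.diff a' :=
  q.j_inj <| by
    simp only [q.diff_spec, map_add]
    abel

lemma diff_smul (c : ℂ) (a : A.carrier) : q.diff (c • a) = c • q.diff a :=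
  q.j_inj <| by simp only [q.diff_spec, map_smul, smul_sub]

/-- The algebra `D_α` of a quasihomomorphism. -/
abbrev Dlca : LCA := q.toPreQH.Dlca

/-- The inclusion `B → D_α`. -/
abbrev iotaB : LCAHom B q.Dlca := q.toPreQH.iotaB

/-- The first splitting `α' = id_A ⊕ 0`. -/
abbrev splitFst : LCAHom A q.Dlca := q.toPreQH.splitFst

/-- The second splitting `ᾱ' = id_A ⊕ (ᾱ - α)`. -/
def splitSnd : LCAHom A q.Dlca where
  toFun a := (a, -q.diff a)
  map_add' := fun x y => Prod.ext rfl
    (by show -q.diff (x + y) = -q.diff x + -q.diff y; rw [q.diff_add]; abel)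
  map_mul' := fun x y => by
    refine Prod.ext rfl ?_
    apply q.j_inj
    show q.j (-q.diff (x * y))
        = q.j (q.toPreQH.mulL x (-q.diff y) + q.toPreQH.mulR (-q.diff x) y
            + (-q.diff x) * (-q.diff y))
    simp only [map_add, map_neg, map_mul, q.diff_spec, q.toPreQH.mulL_spec,
      q.toPreQH.mulR_spec, map_mul]
    simp only [mul_sub, sub_mul, neg_sub]
    abel
  map_smul' := fun c x => Prod.ext rfl
    (by show -q.diff (c • x) = c • -q.diff x; rw [q.diff_smul, smul_neg])
  cont' := continuous_id.prodMk q.diff_cont.neg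

/-- The morphism `H(α,ᾱ) := H(ι_B)⁻¹ ∘ (H(α') - H(ᾱ'))` induced by a
quasihomomorphism under a (split exact) functor. -/
def induced (H : LCFunctor) : H.obj A → H.obj B :=
  fun x => Function.invFun (H.map q.iotaB) (H.map q.splitFst x - H.map q.splitSnd x)

/-- The opposite quasihomomorphism `(ᾱ, α)`. -/
def swap : QuasiHom A B where
  hat := q.hat
  j := q.j
  j_inj := q.j_inj
  fst := q.snd
  snd := q.fst
  mulL := fun a b => q.toPreQH.mulL a b - q.diff a * b
  mulL_spec := fun a b => by
    simp only [map_sub, map_mul, q.toPreQH.mulL_spec, q.diff_spec, sub_mul]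
    abel
  mulL_cont := q.toPreQH.mulL_cont.sub
    ((q.diff_cont.comp continuous_fst).mul continuous_snd)
  mulR := fun b a => q.toPreQH.mulR b a - b * q.diff a
  mulR_spec := fun b a => by
    simp only [map_sub, map_mul, q.toPreQH.mulR_spec, q.diff_spec, mul_sub]
    abel
  mulR_cont := q.toPreQH.mulR_cont.sub
    (continuous_fst.mul (q.diff_cont.comp continuous_snd))
  diff := fun a => -q.diff a
  diff_spec := fun a => by simp only [map_neg, q.diff_spec, neg_sub]
  diff_cont := q.diff_cont.neg

/-- Precomposition of a quasihomomorphism with a morphism. -/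
def precomp {C : LCA} (f : LCAHom C A) : QuasiHom C B where
  hat := q.hat
  j := q.j
  j_inj := q.j_inj
  fst := q.fst.comp f.toNA
  snd := q.snd.comp f.toNA
  mulL := fun c b => q.toPreQH.mulL (f.toFun c) b
  mulL_spec := fun c b => q.toPreQH.mulL_spec (f.toFun c) b
  mulL_cont := q.toPreQH.mulL_cont.comp
    ((f.cont'.comp continuous_fst).prodMk continuous_snd)
  mulR := fun b c => q.toPreQH.mulR b (f.toFun c)
  mulR_spec := fun b c => q.toPreQH.mulR_spec b (f.toFun c)
  mulR_cont := q.toPreQH.mulR_cont.comp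
    (continuous_fst.prodMk (f.cont'.comp continuous_snd))
  diff := fun c => q.diff (f.toFun c)
  diff_spec := fun c => q.diff_spec (f.toFun c)
  diff_cont := q.diff_cont.comp f.cont'

/-- A quasihomomorphism is in standard form if `B̂` is isomorphic (as an
algebra, compatibly with all the data) to `D_α`. -/
def IsStandard : Prop :=
  ∃ e : q.hat ≃ q.toPreQH.Car,
    (∀ x y, e (x + y) = e x + e y) ∧ (∀ x y, e (x * y) = e x * e y) ∧
      (∀ (c : ℂ) (x), e (c • x) = c • e x) ∧
      (∀ a, e (q.fst a) = q.splitFst.toFun a) ∧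
      (∀ b, e (q.j b) = q.iotaB.toFun b)

end QuasiHom

/-! ### Statement 8: functorial rules for quasihomomorphisms -/

/-- If `α - ᾱ` is (B-valued and) multiplicative, it is a morphism `A → B`. -/
def QuasiHom.diffHom {A B : LCA} (q : QuasiHom A B)
    (hmul : ∀ a a', q.diff (a * a') = q.diff a * q.diff a') : LCAHom A B :=
  ⟨q.diff, q.diff_add, hmul, q.diff_smul, q.diff_cont⟩

/-!
Each rule is an instance of the naturality of the class `H(σ, σ̄) = H(ι)⁻¹ (H(σ) - H(σ̄))` of a
double split extension `B → D ⇉ A`: a homomorphism `D → D'` carrying `ι, σ, σ̄` to `ι', σ', σ̄'`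
(up to maps `A → A'`, `B → B'`) carries `H(σ, σ̄)` to `H(σ', σ̄')`. For (1) and (2) this
homomorphism is `(a, b) ↦ (φ a, b)`, resp. `(a, b) ↦ (a, ψ b)`, on `D_α`; for (3) it is
`(a, b) ↦ (a, b - (α - ᾱ) a) : D_ᾱ → D_α`, which exchanges the two splittings. For (4), the
splitting `α'` is the sum `ι_B ∘ (α - ᾱ) + ᾱ'` of two orthogonal homomorphisms, and a split exact
functor is additive on such sums because it sends `A × A` to `H(A) ⊕ H(A)`.
-/

lemma LCAHom.ext {A B : LCA} {f g : LCAHom A B} (h : ∀ x, f.toFun x = g.toFun x) : f = g := by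
  cases f
  cases g
  congr
  exact funext h

protected lemma LCAHom.map_neg {A B : LCA} (f : LCAHom A B) (x : A.carrier) :
    f.toFun (-x) = -f.toFun x :=
  map_neg f.toNA x

def LCAHom.Orthogonal {A B D : LCA} (φ : LCAHom A D) (ψ : LCAHom B D) : Prop :=
  ∀ a b, φ.toFun a * ψ.toFun b = 0 ∧ ψ.toFun b * φ.toFun a = 0

namespace LCFunctor

variable (H : LCFunctor)

lemma map_comp_apply {A B C : LCA} (f : LCAHom A B) (g : LCAHom B C) (x : H.obj A) :
    H.map (g.comp f) x = H.map g (H.map f x) := by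
  rw [H.map_comp]
  rfl

lemma map_id_apply (A : LCA) (x : H.obj A) : H.map (LCAHom.id A) x = x := by
  rw [H.map_id]
  rfl

lemma map_map_of_comp_eq_id {A B : LCA} {f : LCAHom A B} {g : LCAHom B A}
    (h : g.comp f = LCAHom.id A) (x : H.obj A) : H.map g (H.map f x) = x := by
  rw [← H.map_comp_apply, h, H.map_id_apply]

end LCFunctor

namespace LCA

variable (A B : LCA)

def prod : LCA := { carrier := A.carrier × B.carrier }

def prodFst : LCAHom (A.prod B) A :=
  ⟨Prod.fst, fun _ _ => rfl, fun _ _ => rfl, fun _ _ => rfl, continuous_fst⟩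

def prodSnd : LCAHom (A.prod B) B :=
  ⟨Prod.snd, fun _ _ => rfl, fun _ _ => rfl, fun _ _ => rfl, continuous_snd⟩

def prodInl : LCAHom A (A.prod B) where
  toFun a := (a, 0)
  map_add' _ _ := Prod.ext rfl (add_zero 0).symm
  map_mul' _ _ := Prod.ext rfl (mul_zero 0).symm
  map_smul' c _ := Prod.ext rfl (smul_zero c).symm
  cont' := continuous_id.prodMk continuous_const

def prodInr : LCAHom B (A.prod B) where
  toFun b := (0, b)
  map_add' _ _ := Prod.ext (add_zero 0).symm rfl
  map_mul' _ _ := Prod.ext (mul_zero 0).symm rfl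
  map_smul' c _ := Prod.ext (smul_zero c).symm rfl
  cont' := continuous_const.prodMk continuous_id

def prodDiag : LCAHom A (A.prod A) :=
  ⟨fun a => (a, a), fun _ _ => rfl, fun _ _ => rfl, fun _ _ => rfl,
    continuous_id.prodMk continuous_id⟩

def prodSeqFst : SplitExactSeq B (A.prod B) A where
  ι := A.prodInr B
  π := A.prodFst B
  σ := A.prodInl B
  ι_inj _ _ h := congrArg Prod.snd h
  π_surj a := ⟨(a, 0), rfl⟩
  exact d := ⟨fun h => ⟨d.2, Prod.ext h.symm rfl⟩, by rintro ⟨b, rfl⟩; rfl⟩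
  is_split _ := rfl

def prodSeqSnd : SplitExactSeq A (A.prod B) B where
  ι := A.prodInl B
  π := A.prodSnd B
  σ := A.prodInr B
  ι_inj _ _ h := congrArg Prod.fst h
  π_surj b := ⟨(0, b), rfl⟩
  exact d := ⟨fun h => ⟨d.1, Prod.ext rfl h.symm⟩, by rintro ⟨a, rfl⟩; rfl⟩
  is_split _ := rfl

end LCA

def LCAHom.orthogonalSum {A B D : LCA} {φ : LCAHom A D} {ψ : LCAHom B D}
    (h : φ.Orthogonal ψ) : LCAHom (A.prod B) D where
  toFun p := φ.toFun p.1 + ψ.toFun p.2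
  map_add' p p' := by
    change φ.toFun (p.1 + p'.1) + ψ.toFun (p.2 + p'.2) = _
    rw [φ.map_add', ψ.map_add']
    abel
  map_mul' p p' := by
    change φ.toFun (p.1 * p'.1) + ψ.toFun (p.2 * p'.2) = _
    rw [φ.map_mul', ψ.map_mul', add_mul, mul_add, mul_add, (h _ _).1, (h _ _).2]
    abel
  map_smul' c p := by
    change φ.toFun (c • p.1) + ψ.toFun (c • p.2) = _
    rw [φ.map_smul', ψ.map_smul', smul_add]
  cont' := (φ.cont'.comp continuous_fst).add (ψ.cont'.comp continuous_snd)

namespace LCFunctor.IsSplitExact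

variable {H : LCFunctor}

lemma map_π_map_ι (hH : H.IsSplitExact) {C B A : LCA} (E : SplitExactSeq C B A)
    (x : H.obj C) : H.map E.π (H.map E.ι x) = 0 :=
  ((hH E).2.2 _).mpr ⟨x, rfl⟩

lemma map_inl_fst_add_map_inr_snd (hH : H.IsSplitExact) {A B : LCA} (y : H.obj (A.prod B)) :
    H.map (A.prodInl B) (H.map (A.prodFst B) y) + H.map (A.prodInr B) (H.map (A.prodSnd B) y)
      = y := by
  set z := y - H.map (A.prodInl B) (H.map (A.prodFst B) y)
  have hz : H.map (A.prodFst B) z = 0 := by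
    rw [map_sub, H.map_map_of_comp_eq_id rfl, sub_self]
  obtain ⟨w, hw : H.map (A.prodInr B) w = z⟩ := ((hH (A.prodSeqFst B)).2.2 z).mp hz
  have hw' : H.map (A.prodSnd B) y = w := by
    have h := congrArg (H.map (A.prodSnd B)) hw
    have h0 : H.map (A.prodSnd B) (H.map (A.prodInl B) (H.map (A.prodFst B) y)) = 0 :=
      hH.map_π_map_ι (A.prodSeqSnd B) _
    rwa [H.map_map_of_comp_eq_id rfl, map_sub, h0, sub_zero, eq_comm] at h
  rw [hw', hw, add_sub_cancel]

lemma map_prodDiag (hH : H.IsSplitExact) {A : LCA} (x : H.obj A) :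
    H.map (LCA.prodDiag A) x = H.map (A.prodInl A) x + H.map (A.prodInr A) x := by
  conv_lhs => rw [← hH.map_inl_fst_add_map_inr_snd (H.map (LCA.prodDiag A) x)]
  rw [H.map_map_of_comp_eq_id (f := LCA.prodDiag A) rfl,
    H.map_map_of_comp_eq_id (f := LCA.prodDiag A) rfl]

lemma map_add_of_orthogonal (hH : H.IsSplitExact) {A D : LCA} {φ ψ : LCAHom A D}
    (h : φ.Orthogonal ψ) (θ : LCAHom A D) (hθ : ∀ a, θ.toFun a = φ.toFun a + ψ.toFun a)
    (x : H.obj A) : H.map θ x = H.map φ x + H.map ψ x := by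
  set σ := LCAHom.orthogonalSum h
  have hφ : σ.comp (A.prodInl A) = φ :=
    LCAHom.ext fun a => (congrArg _ ψ.map_zero).trans (add_zero _)
  have hψ : σ.comp (A.prodInr A) = ψ :=
    LCAHom.ext fun a => (congrArg (· + _) φ.map_zero).trans (zero_add _)
  have hθ' : σ.comp (LCA.prodDiag A) = θ := LCAHom.ext fun a => (hθ a).symm
  rw [← hθ', ← hφ, ← hψ, H.map_comp_apply, H.map_comp_apply, H.map_comp_apply,
    hH.map_prodDiag, map_add]

end LCFunctor.IsSplitExact

namespace DoubleSplitSeq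

variable {B D A : LCA} (E : DoubleSplitSeq B D A) {H : LCFunctor}

def toSplitExactSeq : SplitExactSeq B D A :=
  ⟨E.ι, E.π, E.σ, E.ι_inj, E.π_surj, E.exact, E.is_split⟩

def swap : DoubleSplitSeq B D A :=
  { E with σ := E.σ', σ' := E.σ, is_split := E.is_split', is_split' := E.is_split }

lemma map_ι_induced (hH : H.IsSplitExact) (x : H.obj A) :
    H.map E.ι (E.induced H x) = H.map E.σ x - H.map E.σ' x := by
  have h0 : H.map E.π (H.map E.σ x - H.map E.σ' x) = 0 := by
    rw [map_sub, H.map_map_of_comp_eq_id (LCAHom.ext E.is_split),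
      H.map_map_of_comp_eq_id (LCAHom.ext E.is_split'), sub_self]
  exact Function.invFun_eq (((hH E.toSplitExactSeq).2.2 _).mp h0)

lemma induced_eq_of_map_ι (hH : H.IsSplitExact) {x : H.obj A} {w : H.obj B}
    (hw : H.map E.ι w = H.map E.σ x - H.map E.σ' x) : E.induced H x = w :=
  (hH E.toSplitExactSeq).1 ((E.map_ι_induced hH x).trans hw.symm)

lemma induced_map {B' D' A' : LCA} (E' : DoubleSplitSeq B' D' A') (hH : H.IsSplitExact)
    (g : LCAHom D D') (fA : LCAHom A A') (fB : LCAHom B B')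
    (hι : g.comp E.ι = E'.ι.comp fB) (hσ : g.comp E.σ = E'.σ.comp fA)
    (hσ' : g.comp E.σ' = E'.σ'.comp fA) (x : H.obj A) :
    E'.induced H (H.map fA x) = H.map fB (E.induced H x) := by
  refine E'.induced_eq_of_map_ι hH ?_
  rw [← H.map_comp_apply, ← hι, H.map_comp_apply, E.map_ι_induced hH, map_sub,
    ← H.map_comp_apply, ← H.map_comp_apply, hσ, hσ', H.map_comp_apply, H.map_comp_apply]

lemma swap_induced (hH : H.IsSplitExact) (x : H.obj A) :
    E.swap.induced H x = -E.induced H x :=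
  E.swap.induced_eq_of_map_ι hH <|
    ((map_neg _ _).trans (congrArg Neg.neg (E.map_ι_induced hH x))).trans (neg_sub _ _)

lemma induced_eq_map_of_orthogonal (hH : H.IsSplitExact) (φ : LCAHom A B)
    (horth : (E.ι.comp φ).Orthogonal E.σ')
    (hσ : ∀ a, E.σ.toFun a = E.ι.toFun (φ.toFun a) + E.σ'.toFun a) (x : H.obj A) :
    E.induced H x = H.map φ x :=
  E.induced_eq_of_map_ι hH <| by
    rw [hH.map_add_of_orthogonal horth E.σ hσ, add_sub_cancel_right, H.map_comp_apply]

end DoubleSplitSeq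

def PreQH.mapDlca {A B A' B' : LCA} (q : PreQH A B) (r : PreQH A' B') (fA : LCAHom A A')
    (fB : LCAHom B B') (hL : ∀ a b, fB.toFun (q.mulL a b) = r.mulL (fA.toFun a) (fB.toFun b))
    (hR : ∀ b a, fB.toFun (q.mulR b a) = r.mulR (fB.toFun b) (fA.toFun a)) :
    LCAHom q.Dlca r.Dlca where
  toFun p := (fA.toFun p.1, fB.toFun p.2)
  map_add' p p' := Prod.ext (fA.map_add' _ _) (fB.map_add' _ _)
  map_mul' p p' := by
    refine Prod.ext (fA.map_mul' _ _) ?_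
    change fB.toFun (q.mulL p.1 p'.2 + q.mulR p.2 p'.1 + p.2 * p'.2)
      = r.mulL (fA.toFun p.1) (fB.toFun p'.2) + r.mulR (fB.toFun p.2) (fA.toFun p'.1)
        + fB.toFun p.2 * fB.toFun p'.2
    rw [fB.map_add', fB.map_add', fB.map_mul', hL, hR]
  map_smul' c p := Prod.ext (fA.map_smul' _ _) (fB.map_smul' _ _)
  cont' := (fA.cont'.comp continuous_fst).prodMk (fB.cont'.comp continuous_snd)

namespace QuasiHom

variable {A B : LCA} (q : QuasiHom A B) {H : LCFunctor}

def toDoubleSplitSeq : DoubleSplitSeq B q.Dlca A :=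
  { q.toPreQH.ext with σ' := q.splitSnd, is_split' := fun _ => rfl }

lemma induced_map {A' B' : LCA} (r : QuasiHom A' B') (fA : LCAHom A A') (fB : LCAHom B B')
    (hL : ∀ a b, fB.toFun (q.mulL a b) = r.mulL (fA.toFun a) (fB.toFun b))
    (hR : ∀ b a, fB.toFun (q.mulR b a) = r.mulR (fB.toFun b) (fA.toFun a))
    (hdiff : ∀ a, fB.toFun (q.diff a) = r.diff (fA.toFun a)) (hH : H.IsSplitExact)
    (x : H.obj A) : r.induced H (H.map fA x) = H.map fB (q.induced H x) :=
  q.toDoubleSplitSeq.induced_map r.toDoubleSplitSeq hH (q.mapDlca r.toPreQH fA fB hL hR) fA fB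
    (LCAHom.ext fun _ => Prod.ext fA.map_zero rfl)
    (LCAHom.ext fun _ => Prod.ext rfl fB.map_zero)
    (LCAHom.ext fun a => Prod.ext rfl ((fB.map_neg _).trans (congrArg Neg.neg (hdiff a)))) x

lemma precomp_induced {C : LCA} (f : LCAHom C A) (hH : H.IsSplitExact) (x : H.obj C) :
    (q.precomp f).induced H x = q.induced H (H.map f x) := by
  rw [(q.precomp f).induced_map q f (LCAHom.id B) (fun _ _ => rfl) (fun _ _ => rfl)
    (fun _ => rfl) hH x, H.map_id_apply]

lemma postcomp_induced {C : LCA} (r : QuasiHom A C) (ψ : q.hat → r.hat)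
    (hadd : ∀ x y, ψ (x + y) = ψ x + ψ y) (hmul : ∀ x y, ψ (x * y) = ψ x * ψ y)
    (ψB : LCAHom B C) (hj : ∀ b, ψ (q.j b) = r.j (ψB.toFun b))
    (hfst : ∀ a, ψ (q.fst a) = r.fst a) (hsnd : ∀ a, ψ (q.snd a) = r.snd a)
    (hH : H.IsSplitExact) (x : H.obj A) : r.induced H x = H.map ψB (q.induced H x) := by
  have hsub : ∀ u v, ψ (u - v) = ψ u - ψ v := map_sub (AddMonoidHom.mk' ψ hadd)
  have hL : ∀ a b, ψB.toFun (q.mulL a b) = r.mulL a (ψB.toFun b) := fun a b => r.j_inj <| by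
    rw [r.mulL_spec, ← hj, ← hj, q.mulL_spec, hmul, hfst]
  have hR : ∀ b a, ψB.toFun (q.mulR b a) = r.mulR (ψB.toFun b) a := fun b a => r.j_inj <| by
    rw [r.mulR_spec, ← hj, ← hj, q.mulR_spec, hmul, hfst]
  have hdiff : ∀ a, ψB.toFun (q.diff a) = r.diff a := fun a => r.j_inj <| by
    rw [r.diff_spec, ← hj, q.diff_spec, hsub, hfst, hsnd]
  rw [← q.induced_map r (LCAHom.id A) ψB hL hR hdiff hH x, H.map_id_apply]

def swapDlcaHom : LCAHom q.swap.Dlca q.Dlca where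
  toFun p := (p.1, p.2 - q.diff p.1)
  map_add' p p' := by
    refine Prod.ext rfl ?_
    change p.2 + p'.2 - q.diff (p.1 + p'.1) = (p.2 - q.diff p.1) + (p'.2 - q.diff p'.1)
    rw [q.diff_add]
    abel
  map_mul' p p' := by
    refine Prod.ext rfl (q.j_inj ?_)
    change q.j ((q.mulL p.1 p'.2 - q.diff p.1 * p'.2) + (q.mulR p.2 p'.1 - p.2 * q.diff p'.1)
        + p.2 * p'.2 - q.diff (p.1 * p'.1))
      = q.j (q.mulL p.1 (p'.2 - q.diff p'.1) + q.mulR (p.2 - q.diff p.1) p'.1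
        + (p.2 - q.diff p.1) * (p'.2 - q.diff p'.1))
    simp only [map_add, map_sub, map_mul, q.mulL_spec, q.mulR_spec, q.diff_spec, mul_sub,
      sub_mul]
    abel
  map_smul' c p := by
    refine Prod.ext rfl ?_
    change c • p.2 - q.diff (c • p.1) = c • (p.2 - q.diff p.1)
    rw [q.diff_smul, smul_sub]
  cont' := continuous_fst.prodMk (continuous_snd.sub (q.diff_cont.comp continuous_fst))

lemma swap_induced (hH : H.IsSplitExact) (x : H.obj A) :
    q.swap.induced H x = -q.induced H x := by
  have h := q.swap.toDoubleSplitSeq.induced_map q.toDoubleSplitSeq.swap hH q.swapDlcaHom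
    (LCAHom.id A) (LCAHom.id B)
    (LCAHom.ext fun b => Prod.ext rfl
      ((congrArg (b - ·) (map_zero (AddMonoidHom.mk' q.diff q.diff_add))).trans (sub_zero b)))
    (LCAHom.ext fun a => Prod.ext rfl (zero_sub _))
    (LCAHom.ext fun a => Prod.ext rfl ((congrArg (· - _) (neg_neg _)).trans (sub_self _))) x
  rw [H.map_id_apply, H.map_id_apply, DoubleSplitSeq.swap_induced _ hH] at h
  exact h.symm

lemma orthogonal_iotaB_diffHom_splitSnd (hmul : ∀ a a', q.diff (a * a') = q.diff a * q.diff a')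
    (horth : ∀ a a', q.j (q.diff a) * q.snd a' = 0 ∧ q.snd a * q.j (q.diff a') = 0) :
    (q.iotaB.comp (q.diffHom hmul)).Orthogonal q.splitSnd := by
  intro a a'
  constructor
  · refine Prod.ext (zero_mul a') ?_
    change q.mulL 0 (-q.diff a') + q.mulR (q.diff a) a' + q.diff a * -q.diff a' = 0
    rw [q.mulL_zero_left, zero_add]
    apply q.j_inj
    rw [map_zero, map_add, map_mul, map_neg, q.mulR_spec, q.diff_spec a', mul_neg, mul_sub,
      neg_sub, ← (horth a a').1]
    abel
  · refine Prod.ext (mul_zero a') ?_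
    change q.mulL a' (q.diff a) + q.mulR (-q.diff a') 0 + -q.diff a' * q.diff a = 0
    rw [q.mulR_zero_right, add_zero]
    apply q.j_inj
    rw [map_zero, map_add, map_mul, map_neg, q.mulL_spec, q.diff_spec a', neg_sub, sub_mul,
      ← (horth a' a).2]
    abel

lemma induced_eq_map_diffHom (hmul : ∀ a a', q.diff (a * a') = q.diff a * q.diff a')
    (horth : ∀ a a', q.j (q.diff a) * q.snd a' = 0 ∧ q.snd a * q.j (q.diff a') = 0)
    (hH : H.IsSplitExact) (x : H.obj A) : q.induced H x = H.map (q.diffHom hmul) x :=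
  q.toDoubleSplitSeq.induced_eq_map_of_orthogonal hH (q.diffHom hmul)
    (q.orthogonal_iotaB_diffHom_splitSnd hmul horth)
    (fun a => Prod.ext (zero_add a).symm (add_neg_cancel (q.diff a)).symm) x

end QuasiHom

/-- **Statement 8.** For an `LC`-quasihomomorphism `(α,ᾱ) : A ⇉ B̂ ⊵ B` and a
split exact functor `H`:
(1) `H((α,ᾱ)∘φ) = H(α,ᾱ) ∘ H(φ)`;
(2) `H(ψ∘(α,ᾱ)) = H(ψ) ∘ H(α,ᾱ)` whenever `ψ : B̂ → Ĉ` is an algebra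
homomorphism such that `(ψ∘α, ψ∘ᾱ) : A ⇉ Ĉ ⊵ C` is again a quasihomomorphism;
(3) `H(α,ᾱ) = -H(ᾱ,α)`;
(4) if `α - ᾱ` is a homomorphism orthogonal to `ᾱ` then `H(α,ᾱ) = H(α-ᾱ)`. -/
theorem quasihom_induced_rules (A B : LCA) (q : QuasiHom A B)
    (H : LCFunctor) (hH : H.IsSplitExact) :
    (∀ (C : LCA) (f : LCAHom C A) (x : H.obj C),
        (q.precomp f).induced H x = q.induced H (H.map f x)) ∧
    (∀ (C : LCA) (r : QuasiHom A C) (ψ : q.hat → r.hat),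
        (∀ x y, ψ (x + y) = ψ x + ψ y) →
        (∀ x y, ψ (x * y) = ψ x * ψ y) →
        (∀ (c : ℂ) (x), ψ (c • x) = c • ψ x) →
        ∀ ψB : LCAHom B C,
          (∀ b, ψ (q.j b) = r.j (ψB.toFun b)) →
          (∀ a, ψ (q.fst a) = r.fst a) →
          (∀ a, ψ (q.snd a) = r.snd a) →
          ∀ x : H.obj A, r.induced H x = H.map ψB (q.induced H x)) ∧
    (∀ x : H.obj A, q.swap.induced H x = -q.induced H x) ∧
    (∀ (hmul : ∀ a a', q.diff (a * a') = q.diff a * q.diff a'),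
        (∀ a a', q.j (q.diff a) * q.snd a' = 0 ∧ q.snd a * q.j (q.diff a') = 0) →
        ∀ x : H.obj A, q.induced H x = H.map (q.diffHom hmul) x) :=
  ⟨fun _ f x => q.precomp_induced f hH x,
    fun _ r ψ hadd hmul _ ψB hj hfst hsnd x =>
      q.postcomp_induced r ψ hadd hmul ψB hj hfst hsnd hH x,
    fun x => q.swap_induced hH x,
    fun hmul horth x => q.induced_eq_map_diffHom hmul horth hH x⟩
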